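/- arXiv:2408.09062 — 4 statements merged into one kernel-verified Lean document; each statement's English description precedes it below -/
import Mathlib

section
/- Let 1<p<∞ and let f = h + conj(g) be a sense-preserving harmonic mapping on 𝔻 whose dilatation w = g'/h' satisfies sup_{z∈𝔻}|w(z)| < 1 and w ∈ B_p. Then log J_f ∈ 𝔅̃_p if and only if log h' ∈ B_p, i.e. ∫_𝔻 |h''(z)/h'(z) − w'(z)·conj(w(z))/(1−|w(z)|²)|^p (1−|z|²)^{p−2} dA(z) < ∞ if and only if ∫_𝔻 |h''(z)/h'(z)|^p (1−|z|²)^{p−2} dA(z) < ∞. -/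
open MeasureTheory Metric Complex Set Filter Topology

noncomputable section

/-- The open unit disk in the complex plane. -/
def unitDisk : Set ℂ := Metric.ball 0 1

/-- The disk automorphism `φ_a(z) = (a - z)/(1 - conj a · z)`. -/
def moebius (a z : ℂ) : ℂ := (a - z) / (1 - (starRingEnd ℂ) a * z)

/-- The pre-Schwarzian derivative `h''/h'` of an analytic function. -/
def preSchwarz (h : ℂ → ℂ) (z : ℂ) : ℂ := deriv (deriv h) z / deriv h z

/-- The Schwarzian derivative `(h''/h')' - (1/2)(h''/h')²` of an analytic function. -/
def schwarz (h : ℂ → ℂ) (z : ℂ) : ℂ :=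
  deriv (preSchwarz h) z - (1 / 2) * preSchwarz h z ^ 2

/-- The (second complex) dilatation `w = g'/h'` of the harmonic map `f = h + conj g`. -/
def dil (h g : ℂ → ℂ) (z : ℂ) : ℂ := deriv g z / deriv h z

/-- `F_z = h''/h' - w'·conj(w)/(1-|w|²)` for `F = log J_f`, `f = h + conj g`. -/
def FzLogJac (h g : ℂ → ℂ) (z : ℂ) : ℂ :=
  preSchwarz h z -
    deriv (dil h g) z * (starRingEnd ℂ) (dil h g z) / ((1 - ‖dil h g z‖ ^ 2 : ℝ) : ℂ)

/-- The harmonic Schwarzian derivative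
`S_f = S_h + (conj w/(1-|w|²))(w'·h''/h' - w'') - (3/2)(w'·conj w/(1-|w|²))²`. -/
def harmSchwarz (h g : ℂ → ℂ) (z : ℂ) : ℂ :=
  schwarz h z
    + ((starRingEnd ℂ) (dil h g z) / ((1 - ‖dil h g z‖ ^ 2 : ℝ) : ℂ))
        * (deriv (dil h g) z * preSchwarz h z - deriv (deriv (dil h g)) z)
    - (3 / 2) * (deriv (dil h g) z * (starRingEnd ℂ) (dil h g z)
        / ((1 - ‖dil h g z‖ ^ 2 : ℝ) : ℂ)) ^ 2

/-- `f = h + conj g` is a sense-preserving harmonic mapping on the unit disk: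
`h, g` analytic on `𝔻` and `J_f = |h'|² - |g'|² > 0` on `𝔻`. -/
def SensePreserving (h g : ℂ → ℂ) : Prop :=
  DifferentiableOn ℂ h unitDisk ∧ DifferentiableOn ℂ g unitDisk ∧
    ∀ z ∈ unitDisk, ‖deriv g z‖ < ‖deriv h z‖

/-- `f` is uniformly locally univalent on the unit disk: injective on every
pseudo-hyperbolic disk of some fixed radius `r < 1`. -/
def UnifLocUnivalent (f : ℂ → ℂ) : Prop :=
  ∃ r : ℝ, 0 < r ∧ r < 1 ∧ ∀ a ∈ unitDisk,
    Set.InjOn f {z | z ∈ unitDisk ∧ ‖(z - a) / (1 - (starRingEnd ℂ) a * z)‖ < r}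

/-- The Wirtinger derivative `F_z = (1/2)(∂ₓF - i ∂_yF)` of a real-differentiable map. -/
def wirtZ (F : ℂ → ℂ) (z : ℂ) : ℂ :=
  (1 / 2) * (fderiv ℝ F z 1 - Complex.I * fderiv ℝ F z Complex.I)

/-- The Wirtinger derivative `F_{z̄} = (1/2)(∂ₓF + i ∂_yF)` of a real-differentiable map. -/
def wirtZbar (F : ℂ → ℂ) (z : ℂ) : ℂ :=
  (1 / 2) * (fderiv ℝ F z 1 + Complex.I * fderiv ℝ F z Complex.I)

/-- The Jacobian `J_F = |F_z|² - |F_{z̄}|²` of a smooth map `F : 𝔻 → ℂ`. -/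
def jac (F : ℂ → ℂ) (z : ℂ) : ℝ := ‖wirtZ F z‖ ^ 2 - ‖wirtZbar F z‖ ^ 2

/-- `σ` is a holomorphic automorphism of the unit disk. -/
def DiskAut (σ : ℂ → ℂ) : Prop :=
  DifferentiableOn ℂ σ unitDisk ∧ Set.BijOn σ unitDisk unitDisk

/-- The function `h(z) = 2(1-z)^{-1/2}` (principal branch). -/
def hfun (w : ℂ) : ℂ := 2 * (1 - w) ^ (-(1 / 2) : ℂ)

/-! The correction term `w'·conj w/(1-|w|²)` separating `F_z` from `h''/h'` is bounded by
`k/(1-k²)·|w'|` once `|w| ≤ k < 1`, so it lies in the weighted space together with `w'`.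
Since `(a + b)^p ≤ 2^p (a^p + b^p)`, finiteness of the weighted `L^p` integral is stable under
such perturbations, in both directions. -/

theorem Real.add_rpow_le_two_rpow_mul_rpow_add_rpow {p a b : ℝ} (ha : 0 ≤ a) (hb : 0 ≤ b)
    (hp : 0 ≤ p) : (a + b) ^ p ≤ 2 ^ p * (a ^ p + b ^ p) := calc
  (a + b) ^ p ≤ (2 * max a b) ^ p := by
    rw [two_mul]; gcongr <;> simp
  _ = 2 ^ p * max a b ^ p := Real.mul_rpow zero_le_two (le_max_of_le_left ha)
  _ ≤ 2 ^ p * (a ^ p + b ^ p) := by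
    gcongr
    rcases max_choice a b with hab | hab <;> rw [hab]
    · exact le_add_of_nonneg_right (Real.rpow_nonneg hb p)
    · exact le_add_of_nonneg_left (Real.rpow_nonneg ha p)

theorem ENNReal.ofReal_rpow_mul_le_of_le_add {p C x y z W : ℝ} (hp : 0 ≤ p) (hC : 0 ≤ C)
    (hx : 0 ≤ x) (hy : 0 ≤ y) (hz : 0 ≤ z) (hW : 0 ≤ W) (hxyz : x ≤ y + C * z) :
    ENNReal.ofReal (x ^ p * W) ≤
      ENNReal.ofReal (2 ^ p) * ENNReal.ofReal (y ^ p * W)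
        + ENNReal.ofReal (2 ^ p * C ^ p) * ENNReal.ofReal (z ^ p * W) := by
  have hpow : x ^ p ≤ 2 ^ p * (y ^ p + C ^ p * z ^ p) := calc
    x ^ p ≤ (y + C * z) ^ p := by gcongr
    _ ≤ 2 ^ p * (y ^ p + (C * z) ^ p) :=
      Real.add_rpow_le_two_rpow_mul_rpow_add_rpow hy (by positivity) hp
    _ = 2 ^ p * (y ^ p + C ^ p * z ^ p) := by rw [Real.mul_rpow hC hz]
  rw [← ENNReal.ofReal_mul (by positivity), ← ENNReal.ofReal_mul (by positivity),
    ← ENNReal.ofReal_add (by positivity) (by positivity)]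
  apply ENNReal.ofReal_le_ofReal
  calc x ^ p * W ≤ 2 ^ p * (y ^ p + C ^ p * z ^ p) * W := by gcongr
    _ = _ := by ring

section WeightedLp

variable {α E : Type*} [MeasurableSpace α] [NormedAddCommGroup E] [MeasurableSpace E]
  [OpensMeasurableSpace E] {μ : Measure α} {s : Set α}
  {p C : ℝ} {W : α → ℝ} {A B u : α → E}

theorem setLIntegral_ofReal_norm_rpow_mul_lt_top_of_norm_le_add (hs : MeasurableSet s)
    (hp : 0 ≤ p) (hC : 0 ≤ C) (hW : ∀ x ∈ s, 0 ≤ W x) (hWm : AEMeasurable W (μ.restrict s))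
    (hBm : AEMeasurable B (μ.restrict s)) (hAB : ∀ x ∈ s, ‖A x‖ ≤ ‖B x‖ + C * ‖u x‖)
    (hB : ∫⁻ x in s, ENNReal.ofReal (‖B x‖ ^ p * W x) ∂μ < ⊤)
    (hu : ∫⁻ x in s, ENNReal.ofReal (‖u x‖ ^ p * W x) ∂μ < ⊤) :
    ∫⁻ x in s, ENNReal.ofReal (‖A x‖ ^ p * W x) ∂μ < ⊤ := by
  have hBWm : AEMeasurable (fun x => ENNReal.ofReal (‖B x‖ ^ p * W x)) (μ.restrict s) := by
    fun_prop
  calc ∫⁻ x in s, ENNReal.ofReal (‖A x‖ ^ p * W x) ∂μ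
      ≤ ∫⁻ x in s, (ENNReal.ofReal (2 ^ p) * ENNReal.ofReal (‖B x‖ ^ p * W x)
          + ENNReal.ofReal (2 ^ p * C ^ p) * ENNReal.ofReal (‖u x‖ ^ p * W x)) ∂μ :=
        setLIntegral_mono' hs fun x hx => ENNReal.ofReal_rpow_mul_le_of_le_add hp hC
          (norm_nonneg _) (norm_nonneg _) (norm_nonneg _) (hW x hx) (hAB x hx)
    _ = ENNReal.ofReal (2 ^ p) * ∫⁻ x in s, ENNReal.ofReal (‖B x‖ ^ p * W x) ∂μ
          + ENNReal.ofReal (2 ^ p * C ^ p) * ∫⁻ x in s, ENNReal.ofReal (‖u x‖ ^ p * W x) ∂μ := by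
        rw [lintegral_add_left' (hBWm.const_mul _), lintegral_const_mul' _ _ ENNReal.ofReal_ne_top,
          lintegral_const_mul' _ _ ENNReal.ofReal_ne_top]
    _ < ⊤ := by finiteness

theorem setLIntegral_ofReal_norm_rpow_mul_lt_top_iff_of_norm_sub_le (hs : MeasurableSet s)
    (hp : 0 ≤ p) (hC : 0 ≤ C) (hW : ∀ x ∈ s, 0 ≤ W x) (hWm : AEMeasurable W (μ.restrict s))
    (hAm : AEMeasurable A (μ.restrict s)) (hBm : AEMeasurable B (μ.restrict s))
    (hAB : ∀ x ∈ s, ‖A x - B x‖ ≤ C * ‖u x‖)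
    (hu : ∫⁻ x in s, ENNReal.ofReal (‖u x‖ ^ p * W x) ∂μ < ⊤) :
    ∫⁻ x in s, ENNReal.ofReal (‖A x‖ ^ p * W x) ∂μ < ⊤ ↔
      ∫⁻ x in s, ENNReal.ofReal (‖B x‖ ^ p * W x) ∂μ < ⊤ := by
  constructor
  · refine fun hA => setLIntegral_ofReal_norm_rpow_mul_lt_top_of_norm_le_add hs hp hC hW hWm hAm
      (fun x hx => ?_) hA hu
    exact (norm_le_norm_add_norm_sub (A x) (B x)).trans (by gcongr; exact hAB x hx)
  · refine fun hB => setLIntegral_ofReal_norm_rpow_mul_lt_top_of_norm_le_add hs hp hC hW hWm hBm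
      (fun x hx => ?_) hB hu
    exact (norm_le_norm_add_norm_sub' (A x) (B x)).trans (by gcongr; exact hAB x hx)

end WeightedLp

theorem Complex.norm_mul_conj_div_one_sub_norm_sq_le {a w : ℂ} {k : ℝ} (hw : ‖w‖ ≤ k)
    (hk : k < 1) :
    ‖a * (starRingEnd ℂ) w / ((1 - ‖w‖ ^ 2 : ℝ) : ℂ)‖ ≤ k / (1 - k ^ 2) * ‖a‖ := by
  have hk0 : 0 ≤ k := (norm_nonneg w).trans hw
  have hwk : 0 < 1 - ‖w‖ ^ 2 := by nlinarith [norm_nonneg w]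
  rw [norm_div, norm_mul, RCLike.norm_conj, Complex.norm_real, Real.norm_of_nonneg hwk.le,
    mul_div_assoc, mul_comm]
  gcongr
  nlinarith

theorem FzLogJac_sub_preSchwarz_norm_le {h g : ℂ → ℂ} {k : ℝ} {z : ℂ} (hw : ‖dil h g z‖ ≤ k)
    (hk : k < 1) :
    ‖FzLogJac h g z - preSchwarz h z‖ ≤ k / (1 - k ^ 2) * ‖deriv (dil h g) z‖ := by
  rw [FzLogJac, sub_sub_cancel_left, norm_neg]
  exact Complex.norm_mul_conj_div_one_sub_norm_sq_le hw hk

theorem logJac_besov_iff_logDeriv_besov_general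
    (p : ℝ) (hp : 1 < p) (h g : ℂ → ℂ)
    (hwb : ∃ k : ℝ, k < 1 ∧ ∀ z ∈ unitDisk, ‖dil h g z‖ ≤ k)
    (hwBp : ∫⁻ z in unitDisk,
        ENNReal.ofReal (‖deriv (dil h g) z‖ ^ p * (1 - ‖z‖ ^ 2) ^ (p - 2)) < ⊤) :
    (∫⁻ z in unitDisk, ENNReal.ofReal
        (‖FzLogJac h g z‖ ^ p * (1 - ‖z‖ ^ 2) ^ (p - 2)) < ⊤)
      ↔ (∫⁻ z in unitDisk, ENNReal.ofReal
          (‖preSchwarz h z‖ ^ p * (1 - ‖z‖ ^ 2) ^ (p - 2)) < ⊤) := by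
  obtain ⟨k, hk1, hk⟩ := hwb
  have hk0 : 0 ≤ k := (norm_nonneg _).trans (hk 0 (mem_ball_self one_pos))
  have hweight : ∀ z ∈ unitDisk, 0 ≤ (1 - ‖z‖ ^ 2) ^ (p - 2) := fun z hz => by
    have : ‖z‖ < 1 := mem_ball_zero_iff.mp hz
    exact Real.rpow_nonneg (by nlinarith [norm_nonneg z]) _
  refine setLIntegral_ofReal_norm_rpow_mul_lt_top_iff_of_norm_sub_le measurableSet_ball
    (by linarith) (div_nonneg hk0 (by nlinarith)) hweight (by fun_prop) ?_ ?_
    (fun z hz => FzLogJac_sub_preSchwarz_norm_le (hk z hz) hk1) hwBp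
  · unfold FzLogJac preSchwarz dil; fun_prop
  · unfold preSchwarz; fun_prop

/-- For a sense-preserving harmonic map with `‖w‖_∞ < 1` and `w ∈ B_p`,
`log J_f ∈ 𝔅̃_p` if and only if `log h' ∈ B_p`. -/
theorem logJac_besov_iff_logDeriv_besov
    (p : ℝ) (hp : 1 < p) (h g : ℂ → ℂ)
    (hsp : SensePreserving h g)
    (hwb : ∃ k : ℝ, k < 1 ∧ ∀ z ∈ unitDisk, ‖dil h g z‖ ≤ k)
    (hwBp : ∫⁻ z in unitDisk,
        ENNReal.ofReal (‖deriv (dil h g) z‖ ^ p * (1 - ‖z‖ ^ 2) ^ (p - 2)) < ⊤) :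
    (∫⁻ z in unitDisk, ENNReal.ofReal
        (‖FzLogJac h g z‖ ^ p * (1 - ‖z‖ ^ 2) ^ (p - 2)) < ⊤)
      ↔ (∫⁻ z in unitDisk, ENNReal.ofReal
          (‖preSchwarz h z‖ ^ p * (1 - ‖z‖ ^ 2) ^ (p - 2)) < ⊤) :=
  logJac_besov_iff_logDeriv_besov_general p hp h g hwb hwBp
end
end

section
/- Let f = h + conj(g) be a sense-preserving harmonic mapping on 𝔻 whose dilatation w = g'/h' satisfies ‖w‖ := sup_{z∈𝔻}|w(z)| < 1, and suppose β₂(f) := sup_{z∈𝔻} (1−|z|²) √(J_f(z)) < ∞ (i.e. f ∈ 𝔅𝒯). Then for all z₁, z₂ ∈ 𝔻, |f(z₁) − f(z₂)| ≤ ((1+‖w‖)/(1−‖w‖))^{1/2} · β₂(f) · d_h(z₁, z₂), where d_h is the hyperbolic distance on 𝔻. -/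
open MeasureTheory Metric Complex Set Filter Topology

noncomputable section

/-!
Since `|g'| ≤ ‖w‖ |h'|`, one has `(|h'| + |g'|)² ≤ (1 + ‖w‖)/(1 - ‖w‖) · (|h'|² - |g'|²)`, so the
real differential of `f` satisfies `‖Df(z)‖ (1 - |z|²) ≤ C := √((1 + ‖w‖)/(1 - ‖w‖)) β₂(f)`:
`f` is `C`-Lipschitz for the hyperbolic metric `|dz|/(1 - |z|²)`. Integrating along the geodesic
`t ↦ φ_{z₂}(t v)`, `0 ≤ t ≤ ρ = |φ_{z₂}(z₁)|`, whose speed is `(1 - |γ(t)|²)/(1 - t²)`, gives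
`|f(z₁) - f(z₂)| ≤ C artanh ρ = C d_h(z₁, z₂)`.
-/

lemma mem_unitDisk_iff {z : ℂ} : z ∈ unitDisk ↔ ‖z‖ < 1 := mem_ball_zero_iff

lemma isOpen_unitDisk : IsOpen unitDisk := isOpen_ball

lemma one_sub_conj_mul_ne_zero {a z : ℂ} (ha : a ∈ unitDisk) (hz : z ∈ unitDisk) :
    1 - starRingEnd ℂ a * z ≠ 0 := by
  rw [mem_unitDisk_iff] at ha hz
  refine sub_ne_zero.mpr fun h => ?_
  have : ‖starRingEnd ℂ a * z‖ < 1 := by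
    rw [norm_mul, RCLike.norm_conj]
    nlinarith [norm_nonneg a, norm_nonneg z]
  simp [← h] at this

lemma normSq_one_sub_conj_mul_sub_normSq_sub (a z : ℂ) :
    normSq (1 - starRingEnd ℂ a * z) - normSq (a - z) = (1 - normSq a) * (1 - normSq z) := by
  simp only [normSq_apply, sub_re, sub_im, mul_re, mul_im, one_re, one_im, conj_re, conj_im]
  ring

lemma one_sub_sq_norm_moebius {a z : ℂ} (hz : 1 - starRingEnd ℂ a * z ≠ 0) :
    1 - ‖moebius a z‖ ^ 2 = (1 - ‖a‖ ^ 2) * (1 - ‖z‖ ^ 2) / ‖1 - starRingEnd ℂ a * z‖ ^ 2 := by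
  have hpos : 0 < ‖1 - starRingEnd ℂ a * z‖ ^ 2 := by positivity
  rw [moebius, norm_div, div_pow, eq_div_iff hpos.ne', sub_mul, div_mul_cancel₀ _ hpos.ne']
  simp only [← normSq_eq_norm_sq]
  linarith [normSq_one_sub_conj_mul_sub_normSq_sub a z]

lemma moebius_mem_unitDisk {a z : ℂ} (ha : a ∈ unitDisk) (hz : z ∈ unitDisk) :
    moebius a z ∈ unitDisk := by
  have hd := one_sub_conj_mul_ne_zero ha hz
  have hpos : 0 < 1 - ‖moebius a z‖ ^ 2 := by
    rw [one_sub_sq_norm_moebius hd]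
    rw [mem_unitDisk_iff] at ha hz
    apply div_pos
    · apply mul_pos <;> nlinarith [norm_nonneg a, norm_nonneg z]
    · positivity
  rw [mem_unitDisk_iff]
  nlinarith [norm_nonneg (moebius a z)]

lemma moebius_zero (a : ℂ) : moebius a 0 = a := by simp [moebius]

lemma moebius_moebius {a z : ℂ} (ha : a ∈ unitDisk) (hz : z ∈ unitDisk) :
    moebius a (moebius a z) = z := by
  have hd := one_sub_conj_mul_ne_zero ha hz
  have ha1 : 1 - starRingEnd ℂ a * a ≠ 0 := one_sub_conj_mul_ne_zero ha ha
  have hden : 1 - starRingEnd ℂ a * moebius a z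
      = (1 - starRingEnd ℂ a * a) / (1 - starRingEnd ℂ a * z) := by
    rw [moebius]
    field_simp
    ring
  rw [moebius, hden, eq_comm, eq_div_iff (div_ne_zero ha1 hd), moebius, mul_div_assoc',
    eq_sub_iff_add_eq, ← add_div, div_eq_iff hd]
  ring

lemma hasDerivAt_moebius (a : ℂ) {z : ℂ} (hz : 1 - starRingEnd ℂ a * z ≠ 0) :
    HasDerivAt (moebius a) ((normSq a - 1) / (1 - starRingEnd ℂ a * z) ^ 2) z := by
  have hquot : HasDerivAt (moebius a) _ z := ((hasDerivAt_id z).const_sub a).div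
    (((hasDerivAt_id z).const_mul (starRingEnd ℂ a)).const_sub 1) hz
  refine hquot.congr_deriv ?_
  rw [← mul_conj]
  simp only [id]
  ring

lemma norm_deriv_moebius_mul_one_sub_sq {a z : ℂ} (ha : a ∈ unitDisk)
    (hz : 1 - starRingEnd ℂ a * z ≠ 0) :
    ‖(normSq a - 1 : ℂ) / (1 - starRingEnd ℂ a * z) ^ 2‖ * (1 - ‖z‖ ^ 2)
      = 1 - ‖moebius a z‖ ^ 2 := by
  have ha' : normSq a ≤ 1 := by
    rw [mem_unitDisk_iff] at ha
    rw [normSq_eq_norm_sq]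
    nlinarith [norm_nonneg a]
  have hnum : ‖(normSq a - 1 : ℂ)‖ = 1 - ‖a‖ ^ 2 := by
    rw [← ofReal_one, ← ofReal_sub, norm_real, Real.norm_eq_abs,
      abs_of_nonpos (by linarith), neg_sub, normSq_eq_norm_sq]
  rw [one_sub_sq_norm_moebius hz, norm_div, hnum, norm_pow]
  field_simp

lemma exists_hasDerivAt_moebius_ray {a v : ℂ} (ha : a ∈ unitDisk) (hv : ‖v‖ = 1) {t : ℝ}
    (ht : |t| < 1) :
    ∃ γ' : ℂ, HasDerivAt (fun s : ℝ => moebius a (s * v)) γ' t ∧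
      ‖γ'‖ * (1 - t ^ 2) = 1 - ‖moebius a (t * v)‖ ^ 2 := by
  have hnorm : ‖(t : ℂ) * v‖ = |t| := by rw [norm_mul, hv, mul_one, norm_real, Real.norm_eq_abs]
  have hd := one_sub_conj_mul_ne_zero ha (mem_unitDisk_iff.mpr (hnorm ▸ ht))
  have hray : HasDerivAt (fun w : ℂ => w * v) (1 * v) (t : ℂ) := (hasDerivAt_id _).mul_const v
  have hcomp : HasDerivAt (fun w : ℂ => moebius a (w * v)) _ (t : ℂ) :=
    HasDerivAt.comp (h₂ := moebius a) (t : ℂ) (hasDerivAt_moebius a hd) hray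
  refine ⟨_, hcomp.comp_ofReal, ?_⟩
  rw [← norm_deriv_moebius_mul_one_sub_sq ha hd, norm_mul, one_mul, hv, mul_one, hnorm, sq_abs]

lemma Real.hasDerivAt_artanh {x : ℝ} (hx : x ∈ Ioo (-1) 1) :
    HasDerivAt artanh (1 / (1 - x ^ 2)) x := by
  have hp : 0 < 1 + x := by linarith [hx.1]
  have hm : 0 < 1 - x := by linarith [hx.2]
  have hq : 1 - x ^ 2 ≠ 0 := by nlinarith
  have hlog : HasDerivAt (fun y => 1 / 2 * (log (1 + y) - log (1 - y))) (1 / (1 - x ^ 2)) x := by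
    have h := (((hasDerivAt_id x).const_add 1).log hp.ne').sub
      (((hasDerivAt_id x).const_sub 1).log hm.ne') |>.const_mul (1 / 2 : ℝ)
    refine h.congr_deriv ?_
    simp only [id]
    field_simp
    ring
  refine hlog.congr_of_eventuallyEq ?_
  filter_upwards [Ioo_mem_nhds hx.1 hx.2] with y hy
  have hpy : 0 < 1 + y := by linarith [hy.1]
  have hmy : 0 < 1 - y := by linarith [hy.2]
  rw [artanh_eq_half_log (Ioo_subset_Icc_self hy), log_div hpy.ne' hmy.ne']

lemma norm_sub_le_mul_artanh {E : Type*} [NormedAddCommGroup E] [NormedSpace ℝ E]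
    {G G' : ℝ → E} {C ρ : ℝ} (hρ : ρ ∈ Ico 0 1) (hG : ∀ t ∈ Icc 0 ρ, HasDerivAt G (G' t) t)
    (hG' : ∀ t ∈ Ico 0 ρ, ‖G' t‖ ≤ C / (1 - t ^ 2)) :
    ‖G ρ - G 0‖ ≤ C * Real.artanh ρ := by
  have hartanh : ∀ t ∈ Icc 0 ρ,
      HasDerivAt (fun s => C * Real.artanh s) (C * (1 / (1 - t ^ 2))) t := fun t ht =>
    (Real.hasDerivAt_artanh ⟨by linarith [ht.1], by linarith [ht.2, hρ.2]⟩).const_mul C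
  refine image_norm_le_of_norm_deriv_right_le_deriv_boundary' (f := fun t => G t - G 0)
    (fun t ht => ((hG t ht).sub_const _).continuousAt.continuousWithinAt)
    (fun t ht => ((hG t (Ico_subset_Icc_self ht)).sub_const _).hasDerivWithinAt)
    (by simp)
    (fun t ht => (hartanh t ht).continuousAt.continuousWithinAt)
    (fun t ht => (hartanh t (Ico_subset_Icc_self ht)).hasDerivWithinAt)
    (fun t ht => (hG' t ht).trans_eq (mul_one_div C _).symm)
    ⟨hρ.1, le_rfl⟩

theorem norm_sub_le_mul_artanh_norm_moebius {E : Type*} [NormedAddCommGroup E] [NormedSpace ℝ E]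
    {F : ℂ → E} {C : ℝ} (hF : DifferentiableOn ℝ F unitDisk)
    (hC : ∀ z ∈ unitDisk, ‖fderiv ℝ F z‖ * (1 - ‖z‖ ^ 2) ≤ C) {a b : ℂ} (ha : a ∈ unitDisk)
    (hb : b ∈ unitDisk) :
    ‖F b - F a‖ ≤ C * Real.artanh ‖moebius a b‖ := by
  set ρ := ‖moebius a b‖
  have hρ : ρ ∈ Ico 0 1 := ⟨norm_nonneg _, mem_unitDisk_iff.mp (moebius_mem_unitDisk ha hb)⟩
  obtain ⟨v, hv, hρv⟩ : ∃ v : ℂ, ‖v‖ = 1 ∧ (ρ : ℂ) * v = moebius a b :=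
    ⟨exp (arg (moebius a b) * I), norm_exp_ofReal_mul_I _, norm_mul_exp_arg_mul_I _⟩
  set γ : ℝ → ℂ := fun t => moebius a (t * v)
  have habs : ∀ t ∈ Icc 0 ρ, |t| < 1 := fun t ht => by
    rw [abs_of_nonneg ht.1]; exact ht.2.trans_lt hρ.2
  have hγmem : ∀ t ∈ Icc 0 ρ, γ t ∈ unitDisk := fun t ht => by
    refine moebius_mem_unitDisk ha ?_
    rw [mem_unitDisk_iff, norm_mul, hv, mul_one, norm_real, Real.norm_eq_abs]
    exact habs t ht
  choose! γ' hγ' hγ'norm using fun t ht => exists_hasDerivAt_moebius_ray ha hv (habs t ht)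
  have hG : ∀ t ∈ Icc 0 ρ, HasDerivAt (fun t => F (γ t)) (fderiv ℝ F (γ t) (γ' t)) t :=
    fun t ht => (hF.differentiableAt (isOpen_unitDisk.mem_nhds (hγmem t ht))).hasFDerivAt
      |>.comp_hasDerivAt t (hγ' t ht)
  have hG' : ∀ t ∈ Ico 0 ρ, ‖fderiv ℝ F (γ t) (γ' t)‖ ≤ C / (1 - t ^ 2) := by
    intro t ht
    have ht' := Ico_subset_Icc_self ht
    have hpos : 0 < 1 - t ^ 2 := by nlinarith [abs_lt.mp (habs t ht')]
    rw [le_div_iff₀ hpos]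
    calc ‖fderiv ℝ F (γ t) (γ' t)‖ * (1 - t ^ 2)
        ≤ ‖fderiv ℝ F (γ t)‖ * ‖γ' t‖ * (1 - t ^ 2) := by
          gcongr; exact ContinuousLinearMap.le_opNorm _ _
      _ = ‖fderiv ℝ F (γ t)‖ * (1 - ‖γ t‖ ^ 2) := by rw [mul_assoc, hγ'norm t ht']
      _ ≤ C := hC _ (hγmem t ht')
  have hγ0 : γ 0 = a := by simp [γ, moebius_zero]
  have hγρ : γ ρ = b := by simp only [γ, hρv, moebius_moebius ha hb]
  simpa only [hγ0, hγρ] using norm_sub_le_mul_artanh hρ hG hG'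

lemma hasFDerivAt_add_conj {h g : ℂ → ℂ} {h' g' z : ℂ} (hh : HasDerivAt h h' z)
    (hg : HasDerivAt g g' z) :
    HasFDerivAt (fun z => h z + starRingEnd ℂ (g z))
      (h' • (1 : ℂ →L[ℝ] ℂ) + (conjCLE : ℂ →L[ℝ] ℂ).comp (g' • (1 : ℂ →L[ℝ] ℂ))) z :=
  hh.complexToReal_fderiv.add ((conjCLE : ℂ →L[ℝ] ℂ).hasFDerivAt.comp z hg.complexToReal_fderiv)

lemma norm_fderiv_add_conj_le {h g : ℂ → ℂ} {z : ℂ} (hh : DifferentiableAt ℂ h z)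
    (hg : DifferentiableAt ℂ g z) :
    ‖fderiv ℝ (fun z => h z + starRingEnd ℂ (g z)) z‖ ≤ ‖deriv h z‖ + ‖deriv g z‖ := by
  have hsmul : ∀ c : ℂ, ‖c • (1 : ℂ →L[ℝ] ℂ)‖ ≤ ‖c‖ := fun c =>
    (ContinuousLinearMap.opNorm_smul_le _ _).trans
      (mul_le_of_le_one_right (norm_nonneg c) ContinuousLinearMap.norm_id_le)
  rw [(hasFDerivAt_add_conj hh.hasDerivAt hg.hasDerivAt).fderiv]
  refine (norm_add_le _ _).trans (add_le_add (hsmul _) ?_)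
  calc ‖(conjCLE : ℂ →L[ℝ] ℂ).comp (deriv g z • (1 : ℂ →L[ℝ] ℂ))‖
      ≤ ‖(conjCLE : ℂ →L[ℝ] ℂ)‖ * ‖deriv g z • (1 : ℂ →L[ℝ] ℂ)‖ :=
        ContinuousLinearMap.opNorm_comp_le _ _
    _ ≤ ‖deriv g z‖ := by rw [conjCLE_norm, one_mul]; exact hsmul _

lemma add_le_sqrt_mul_sqrt_sq_sub_sq {A B k : ℝ} (hA : 0 ≤ A) (hB : 0 ≤ B) (hBk : B ≤ k * A)
    (hk : k < 1) :
    A + B ≤ √((1 + k) / (1 - k)) * √(A ^ 2 - B ^ 2) := by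
  have hBA : B ≤ A := hBk.trans (by nlinarith)
  have hsq : (A + B) ^ 2 ≤ (1 + k) / (1 - k) * (A ^ 2 - B ^ 2) := by
    rw [div_mul_eq_mul_div, le_div_iff₀ (by linarith)]
    nlinarith [mul_nonneg (add_nonneg hA hB) (sub_nonneg.mpr hBk)]
  rw [← Real.sqrt_mul' _ (by nlinarith)]
  exact Real.le_sqrt_of_sq_le hsq

lemma differentiableOn_add_conj {h g : ℂ → ℂ} {s : Set ℂ} (hh : DifferentiableOn ℂ h s)
    (hg : DifferentiableOn ℂ g s) :
    DifferentiableOn ℝ (fun z => h z + starRingEnd ℂ (g z)) s :=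
  (hh.restrictScalars ℝ).add
    ((conjCLE : ℂ →L[ℝ] ℂ).differentiable.comp_differentiableOn (hg.restrictScalars ℝ))

lemma norm_fderiv_add_conj_mul_le {h g : ℂ → ℂ} {z : ℂ} {k β : ℝ} (hh : DifferentiableAt ℂ h z)
    (hg : DifferentiableAt ℂ g z) (hz : z ∈ unitDisk) (hgk : ‖deriv g z‖ ≤ k * ‖deriv h z‖)
    (hk : k < 1) (hβ : (1 - ‖z‖ ^ 2) * √(‖deriv h z‖ ^ 2 - ‖deriv g z‖ ^ 2) ≤ β) :
    ‖fderiv ℝ (fun z => h z + starRingEnd ℂ (g z)) z‖ * (1 - ‖z‖ ^ 2)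
      ≤ √((1 + k) / (1 - k)) * β := by
  have hdisk : 0 ≤ 1 - ‖z‖ ^ 2 := by nlinarith [mem_unitDisk_iff.mp hz, norm_nonneg z]
  calc ‖fderiv ℝ (fun z => h z + starRingEnd ℂ (g z)) z‖ * (1 - ‖z‖ ^ 2)
      ≤ (‖deriv h z‖ + ‖deriv g z‖) * (1 - ‖z‖ ^ 2) := by
        gcongr; exact norm_fderiv_add_conj_le hh hg
    _ ≤ √((1 + k) / (1 - k)) * √(‖deriv h z‖ ^ 2 - ‖deriv g z‖ ^ 2) * (1 - ‖z‖ ^ 2) := by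
        gcongr; exact add_le_sqrt_mul_sqrt_sq_sub_sq (norm_nonneg _) (norm_nonneg _) hgk hk
    _ = √((1 + k) / (1 - k)) * ((1 - ‖z‖ ^ 2) * √(‖deriv h z‖ ^ 2 - ‖deriv g z‖ ^ 2)) := by ring
    _ ≤ √((1 + k) / (1 - k)) * β := by gcongr

/-- If `f = h + conj g ∈ 𝔅𝒯` is sense-preserving harmonic with
`‖w‖_∞ < 1`, then `|f(z₁) - f(z₂)| ≤ ((1+‖w‖)/(1-‖w‖))^{1/2} β₂(f) d_h(z₁,z₂)`. -/
theorem blochType_lipschitz_hyperbolic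
    (h g : ℂ → ℂ) (hsp : SensePreserving h g)
    (hbw : BddAbove (Set.range fun z : unitDisk => ‖dil h g (z : ℂ)‖))
    (hwlt : (⨆ z : unitDisk, ‖dil h g (z : ℂ)‖) < 1)
    (hbβ : BddAbove (Set.range fun z : unitDisk =>
      (1 - ‖(z : ℂ)‖ ^ 2) * Real.sqrt (‖deriv h (z : ℂ)‖ ^ 2 - ‖deriv g (z : ℂ)‖ ^ 2))) :
    ∀ z₁ ∈ unitDisk, ∀ z₂ ∈ unitDisk,
      ‖(h z₁ + (starRingEnd ℂ) (g z₁)) - (h z₂ + (starRingEnd ℂ) (g z₂))‖ ≤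
        Real.sqrt ((1 + ⨆ z : unitDisk, ‖dil h g (z : ℂ)‖)
            / (1 - ⨆ z : unitDisk, ‖dil h g (z : ℂ)‖))
          * (⨆ z : unitDisk,
              (1 - ‖(z : ℂ)‖ ^ 2) * Real.sqrt (‖deriv h (z : ℂ)‖ ^ 2 - ‖deriv g (z : ℂ)‖ ^ 2))
          * ((1 / 2) * Real.log
              ((1 + ‖(z₁ - z₂) / (1 - (starRingEnd ℂ) z₂ * z₁)‖)
                / (1 - ‖(z₁ - z₂) / (1 - (starRingEnd ℂ) z₂ * z₁)‖))) := by
  obtain ⟨hh, hg, hJ⟩ := hsp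
  intro z₁ hz₁ z₂ hz₂
  set k := ⨆ z : unitDisk, ‖dil h g (z : ℂ)‖
  set β := ⨆ z : unitDisk,
    (1 - ‖(z : ℂ)‖ ^ 2) * Real.sqrt (‖deriv h (z : ℂ)‖ ^ 2 - ‖deriv g (z : ℂ)‖ ^ 2)
  have hbound : ∀ z ∈ unitDisk, ‖fderiv ℝ (fun z => h z + starRingEnd ℂ (g z)) z‖ *
      (1 - ‖z‖ ^ 2) ≤ Real.sqrt ((1 + k) / (1 - k)) * β := by
    intro z hz
    have hgk : ‖deriv g z‖ ≤ k * ‖deriv h z‖ := by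
      rw [← div_le_iff₀ ((norm_nonneg _).trans_lt (hJ z hz)), ← norm_div]
      exact le_ciSup hbw ⟨z, hz⟩
    have hnhds := isOpen_unitDisk.mem_nhds hz
    exact norm_fderiv_add_conj_mul_le (hh.differentiableAt hnhds) (hg.differentiableAt hnhds) hz
      hgk hwlt (le_ciSup hbβ ⟨z, hz⟩)
  have hρ : ‖moebius z₂ z₁‖ ∈ Icc (-1) 1 :=
    ⟨by linarith [norm_nonneg (moebius z₂ z₁)],
      (mem_unitDisk_iff.mp (moebius_mem_unitDisk hz₂ hz₁)).le⟩
  have key := norm_sub_le_mul_artanh_norm_moebius (differentiableOn_add_conj hh hg) hbound hz₂ hz₁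
  rwa [Real.artanh_eq_half_log hρ, moebius, norm_div, norm_sub_rev z₂, ← norm_div] at key
end
end

section
/- Let h(z) = 2(1−z)^{−1/2} (principal branch) and let f = h + conj(g) be the sense-preserving harmonic mapping on 𝔻 with dilatation w(z) = z, so that J_f(z) = (1−|z|²)/|1−z|³. Then along the real axis, lim_{x→1⁻} (1−x²)√(J_f(x)) = 2^{3/2} ≠ 0; in particular f does not belong to the little Bloch-type class 𝔅𝒯₀, i.e. it is false that lim_{|z|→1⁻} (1−|z|²)√(J_f(z)) = 0. -/
open MeasureTheory Metric Complex Set Filter Topology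

noncomputable section

/- Along the real axis the Jacobian of `f` is `J_f(x) = (1 - x²)/(1 - x)³`, so
`(1 - x²)√J_f(x) = √((1 - x²)³/(1 - x)³) = (1 + x)^{3/2}`, which tends to `2^{3/2}` as `x → 1⁻`.
The radial limit therefore cannot vanish. -/

lemma hasDerivAt_hfun {z : ℂ} (hz : z.re < 1) :
    HasDerivAt hfun ((1 - z) ^ (-(3 / 2) : ℂ)) z := by
  have hslit : 1 - z ∈ slitPlane := Or.inl (by simpa using hz)
  have h := (((hasDerivAt_id z).const_sub 1).cpow_const (c := -(1 / 2)) hslit).const_mul 2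
  rw [show -(1 / 2 : ℂ) - 1 = -(3 / 2) by norm_num] at h
  exact h.congr_deriv (by simp)

lemma norm_deriv_hfun_ofReal_sq {x : ℝ} (hx : x < 1) :
    ‖deriv hfun (x : ℂ)‖ ^ 2 = ((1 - x) ^ 3)⁻¹ := by
  have hpos : 0 < 1 - x := by linarith
  rw [(hasDerivAt_hfun (by simpa using hx)).deriv, ← ofReal_one, ← ofReal_sub,
    norm_cpow_eq_rpow_re_of_pos hpos, ← Real.rpow_natCast, ← Real.rpow_mul hpos.le,
    ← Real.rpow_natCast, ← Real.rpow_neg hpos.le]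
  norm_num

lemma jacobian_ofReal_of_deriv_eq_mul_deriv_hfun {g : ℂ → ℂ}
    (hgd : ∀ z ∈ unitDisk, deriv g z = z * deriv hfun z) {x : ℝ} (hx : x ∈ Ioo (-1) 1) :
    ‖deriv hfun (x : ℂ)‖ ^ 2 - ‖deriv g (x : ℂ)‖ ^ 2 = (1 - x ^ 2) / (1 - x) ^ 3 := by
  have hmem : (x : ℂ) ∈ unitDisk := by
    simpa [unitDisk, abs_lt] using hx
  rw [hgd _ hmem, norm_mul, mul_pow, norm_real, Real.norm_eq_abs, sq_abs,
    norm_deriv_hfun_ofReal_sq hx.2]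
  ring

lemma one_sub_sq_mul_sqrt_div_eq {x : ℝ} (hx : x ∈ Ioo (-1) 1) :
    (1 - x ^ 2) * √((1 - x ^ 2) / (1 - x) ^ 3) = √((1 + x) ^ 3) := by
  have h1 : 0 < 1 - x := by linarith [hx.2]
  have h2 : 0 ≤ 1 - x ^ 2 := by nlinarith [hx.1, hx.2]
  have h3 : 0 < 1 + x := by linarith [hx.1]
  symm
  rw [Real.sqrt_eq_iff_eq_sq (by positivity) (by positivity), mul_pow,
    Real.sq_sqrt (by positivity)]
  field_simp
  ring

lemma tendsto_radial_of_deriv_eq_mul_deriv_hfun {g : ℂ → ℂ}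
    (hgd : ∀ z ∈ unitDisk, deriv g z = z * deriv hfun z) :
    Tendsto (fun x : ℝ =>
        (1 - x ^ 2) * √(‖deriv hfun (x : ℂ)‖ ^ 2 - ‖deriv g (x : ℂ)‖ ^ 2))
      (𝓝[<] 1) (𝓝 (2 ^ ((3 : ℝ) / 2))) := by
  have hlim : Tendsto (fun x : ℝ => √((1 + x) ^ 3)) (𝓝[<] 1) (𝓝 (2 ^ ((3 : ℝ) / 2))) := by
    have hval : √((1 + 1 : ℝ) ^ 3) = 2 ^ ((3 : ℝ) / 2) := by
      rw [Real.sqrt_eq_rpow, ← Real.rpow_natCast, ← Real.rpow_mul (by norm_num)]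
      norm_num
    rw [← hval]
    exact ((continuous_const.add continuous_id).pow 3).sqrt.tendsto 1 |>.mono_left
      nhdsWithin_le_nhds
  refine hlim.congr' ?_
  filter_upwards [Ioo_mem_nhdsLT (show (-1 : ℝ) < 1 by norm_num)] with x hx
  rw [jacobian_ofReal_of_deriv_eq_mul_deriv_hfun hgd hx, one_sub_sq_mul_sqrt_div_eq hx]

lemma not_forall_lt_near_boundary_of_tendsto {F : ℂ → ℝ} {L : ℝ} (hL : 0 < L)
    (hF : Tendsto (fun x : ℝ => F x) (𝓝[<] 1) (𝓝 L)) :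
    ¬ ∀ ε : ℝ, 0 < ε → ∃ r : ℝ, 0 ≤ r ∧ r < 1 ∧ ∀ z ∈ unitDisk, r < ‖z‖ → F z < ε := by
  intro H
  obtain ⟨r, hr0, hr1, hsmall⟩ := H (L / 2) (half_pos hL)
  obtain ⟨x, hxF, hxr, hx1⟩ :=
    ((hF.eventually (eventually_gt_nhds (half_lt_self hL))).and (Ioo_mem_nhdsLT hr1)).exists
  have hnorm : ‖(x : ℂ)‖ = x := by
    rw [norm_real, Real.norm_of_nonneg (hr0.trans hxr.le)]
  have hmem : (x : ℂ) ∈ unitDisk := by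
    rwa [unitDisk, mem_ball_zero_iff, hnorm]
  exact (hsmall x hmem (by rwa [hnorm])).not_gt hxF

theorem shear_example_not_littleBlochType_general
    (g : ℂ → ℂ)
    (hgd : ∀ z ∈ unitDisk, deriv g z = z * deriv hfun z) :
    Tendsto (fun x : ℝ =>
        (1 - x ^ 2) * Real.sqrt (‖deriv hfun (x : ℂ)‖ ^ 2 - ‖deriv g (x : ℂ)‖ ^ 2))
      (𝓝[<] 1) (𝓝 (2 ^ ((3 : ℝ) / 2)))
    ∧ ¬ (∀ ε : ℝ, 0 < ε → ∃ r : ℝ, 0 ≤ r ∧ r < 1 ∧ ∀ z ∈ unitDisk, r < ‖z‖ →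
          (1 - ‖z‖ ^ 2) * Real.sqrt (‖deriv hfun z‖ ^ 2 - ‖deriv g z‖ ^ 2) < ε) := by
  have hradial := tendsto_radial_of_deriv_eq_mul_deriv_hfun hgd
  refine ⟨hradial,
    not_forall_lt_near_boundary_of_tendsto (L := 2 ^ ((3 : ℝ) / 2)) (by positivity) ?_⟩
  simpa only [norm_real, Real.norm_eq_abs, sq_abs] using hradial

/-- For `h(z) = 2(1-z)^{-1/2}` and `f = h + conj g` with dilatation
`w(z) = z`, along the real axis `(1-x²)√(J_f(x)) → 2^{3/2} ≠ 0` as `x → 1⁻`; in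
particular `f ∉ 𝔅𝒯₀`. -/
theorem shear_example_not_littleBlochType
    (g : ℂ → ℂ) (hg : DifferentiableOn ℂ g unitDisk)
    (hgd : ∀ z ∈ unitDisk, deriv g z = z * deriv hfun z) :
    Tendsto (fun x : ℝ =>
        (1 - x ^ 2) * Real.sqrt (‖deriv hfun (x : ℂ)‖ ^ 2 - ‖deriv g (x : ℂ)‖ ^ 2))
      (𝓝[<] 1) (𝓝 (2 ^ ((3 : ℝ) / 2)))
    ∧ ¬ (∀ ε : ℝ, 0 < ε → ∃ r : ℝ, 0 ≤ r ∧ r < 1 ∧ ∀ z ∈ unitDisk, r < ‖z‖ →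
          (1 - ‖z‖ ^ 2) * Real.sqrt (‖deriv hfun z‖ ^ 2 - ‖deriv g z‖ ^ 2) < ε) :=
  shear_example_not_littleBlochType_general g hgd
end
end

section
/- Let p > 1 and let f = h + conj(g) be a sense-preserving harmonic mapping on 𝔻 with dilatation w(z) = z (i.e. g' = z·h'), so that J_f = |h'(z)|²(1−|z|²). If ∫_𝔻 J_f(z)^{p/2} (1−|z|²)^{p−2} dA(z) < ∞ (i.e. f ∈ 𝔅𝒯_p), then lim_{|z|→1⁻} (1−|z|²)√(J_f(z)) = 0 (i.e. f ∈ 𝔅𝒯₀). -/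
open MeasureTheory Metric Complex Set Filter Topology

noncomputable section

/-!
Since `g' = z h'`, `J_f = |h'|² (1 - |z|²)`; with `α = 3p/2 - 2` the hypothesis reads
`∫_𝔻 |h'|^p (1 - |z|²)^α dA < ∞` and the quantity to control is `(1 - |z|²)^{3/2} |h'(z)|`.
On the disk `B` of radius `(1 - |z|)/2` about `z` the weight `1 - |w|²` is within a factor 4
of `1 - |z|²`, and `|B| |h'(z)|^p ≤ ∫_B |h'|^p` (the mean value property of `h'` on circles,
integrated in polar coordinates, followed by Hölder). Hence `((1 - |z|²)^{3/2} |h'(z)|)^p` is at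
most a constant times the integral over `B`, which lies in `{|w| > (3|z| - 1)/2}`; this tail of
a finite integral tends to `0` as `|z| → 1`.
-/

open scoped ENNReal NNReal Real

theorem lintegral_eq_lintegral_Ioi_mul_lintegral_circleMap {f : ℂ → ℝ≥0∞} (hf : Measurable f)
    (c : ℂ) :
    ∫⁻ w, f w = ∫⁻ r in Ioi 0, ENNReal.ofReal r * ∫⁻ θ in Ioo (-π) π, f (circleMap c r θ) := by
  have hcirc : Continuous fun q : ℝ × ℝ ↦ circleMap c q.1 q.2 := by
    unfold circleMap; fun_prop
  calc ∫⁻ w, f w = ∫⁻ v, f (c + v) := (lintegral_add_left_eq_self f c).symm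
    _ = ∫⁻ q in Ioi 0 ×ˢ Ioo (-π) π, ENNReal.ofReal q.1 * f (circleMap c q.1 q.2) := by
      rw [← Complex.lintegral_comp_polarCoord_symm, polarCoord_target]
      congr! 3 with q
      simp [Complex.polarCoord_symm_apply, circleMap, Complex.exp_mul_I]
    _ = ∫⁻ r in Ioi 0, ∫⁻ θ in Ioo (-π) π, ENNReal.ofReal r * f (circleMap c r θ) := by
      rw [Measure.volume_eq_prod, setLIntegral_prod]
      exact (ENNReal.measurable_ofReal.comp measurable_fst).aemeasurable.mul
        (hf.comp hcirc.measurable).aemeasurable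
    _ = _ := by
      congr! 2 with r
      exact lintegral_const_mul _ (hf.comp (hcirc.measurable.comp measurable_prodMk_left))

section MeanValue

variable {E : Type*} [NormedAddCommGroup E] [NormedSpace ℂ E] [CompleteSpace E] {F : ℂ → E}
  {c : ℂ}

theorem ofReal_two_pi_mul_enorm_le_lintegral_enorm_circleMap {r : ℝ} (hr : 0 ≤ r)
    (hF : DiffContOnCl ℂ F (ball c r)) :
    ENNReal.ofReal (2 * π) * ‖F c‖ₑ ≤ ∫⁻ θ in Ioo (-π) π, ‖F (circleMap c r θ)‖ₑ := by
  have hmean : (2 * π) • F c = ∫ θ in -π..π, F (circleMap c r θ) := by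
    rw [← abs_of_nonneg hr] at hF
    rw [← hF.circleAverage, Real.circleAverage_eq_integral_add (-π),
      intervalIntegral.integral_comp_add_right (fun θ ↦ F (circleMap c r θ)), smul_inv_smul₀]
    · congr 1 <;> ring
    · positivity
  calc ENNReal.ofReal (2 * π) * ‖F c‖ₑ = ‖(2 * π) • F c‖ₑ := by
        rw [enorm_smul, Real.enorm_of_nonneg (by positivity)]
    _ ≤ ∫⁻ θ in Ioc (-π) π, ‖F (circleMap c r θ)‖ₑ := by
        rw [hmean, intervalIntegral.integral_of_le (by linarith [Real.pi_pos])]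
        exact enorm_integral_le_lintegral_enorm _
    _ = _ := setLIntegral_congr Ioo_ae_eq_Ioc.symm

theorem volume_ball_mul_enorm_le_setLIntegral_enorm {R : ℝ} (hF : DifferentiableOn ℂ F (ball c R)) :
    volume (ball c R) * ‖F c‖ₑ ≤ ∫⁻ w in ball c R, ‖F w‖ₑ := by
  classical
  have mem_ball_iff (r θ : ℝ) : circleMap c r θ ∈ ball c R ↔ |r| < R := by
    rw [mem_ball, dist_eq_norm, circleMap_sub_center, norm_circleMap_zero]
  have hmeas : Measurable ((ball c R).indicator fun w ↦ ‖F w‖ₑ) := by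
    rw [← piecewise_eq_indicator]
    exact hF.continuousOn.enorm.measurable_piecewise continuousOn_const measurableSet_ball
  have circle_bound : ∀ r ∈ Ioi (0 : ℝ),
      ENNReal.ofReal r * (∫⁻ θ in Ioo (-π) π, (ball c R).indicator 1 (circleMap c r θ)) * ‖F c‖ₑ
        ≤ ENNReal.ofReal r *
          ∫⁻ θ in Ioo (-π) π, (ball c R).indicator (fun w ↦ ‖F w‖ₑ) (circleMap c r θ) := by
    intro r (hr : 0 < r)
    rcases lt_or_ge r R with hrR | hRr
    · have hball θ : circleMap c r θ ∈ ball c R := (mem_ball_iff r θ).2 (by rwa [abs_of_pos hr])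
      simp only [indicator_of_mem (hball _), Pi.one_apply, lintegral_const, Measure.restrict_apply,
        MeasurableSet.univ, univ_inter, Real.volume_Ioo, one_mul, sub_neg_eq_add, mul_assoc]
      gcongr
      rw [← two_mul]
      exact ofReal_two_pi_mul_enorm_le_lintegral_enorm_circleMap hr.le
        (hF.diffContOnCl_ball (closedBall_subset_ball hrR))
    · have hball θ : circleMap c r θ ∉ ball c R :=
        fun h ↦ (hRr.trans (le_abs_self r)).not_gt ((mem_ball_iff r θ).1 h)
      simp [indicator_of_notMem (hball _)]
  calc volume (ball c R) * ‖F c‖ₑ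
      = ∫⁻ r in Ioi 0, ENNReal.ofReal r *
          (∫⁻ θ in Ioo (-π) π, (ball c R).indicator 1 (circleMap c r θ)) * ‖F c‖ₑ := by
        rw [lintegral_mul_const' _ _ enorm_ne_top, ← lintegral_indicator_one measurableSet_ball,
          lintegral_eq_lintegral_Ioi_mul_lintegral_circleMap
            (measurable_one.indicator measurableSet_ball) c]
    _ ≤ ∫⁻ r in Ioi 0, ENNReal.ofReal r *
          ∫⁻ θ in Ioo (-π) π, (ball c R).indicator (fun w ↦ ‖F w‖ₑ) (circleMap c r θ) :=
        setLIntegral_mono' measurableSet_Ioi circle_bound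
    _ = ∫⁻ w in ball c R, ‖F w‖ₑ := by
        rw [← lintegral_indicator measurableSet_ball,
          lintegral_eq_lintegral_Ioi_mul_lintegral_circleMap hmeas c]

theorem volume_ball_mul_enorm_rpow_le_setLIntegral_enorm_rpow {R p : ℝ} (hp : 1 ≤ p)
    (hF : DifferentiableOn ℂ F (ball c R)) :
    volume (ball c R) * ‖F c‖ₑ ^ p ≤ ∫⁻ w in ball c R, ‖F w‖ₑ ^ p := by
  set V := volume (ball c R)
  rcases eq_or_ne V 0 with hV0 | hV0
  · simp [hV0]
  have hVtop : V ≠ ⊤ := measure_ball_lt_top.ne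
  have hp0 : 0 < p := zero_lt_one.trans_le hp
  have holder : V * ‖F c‖ₑ ≤ (∫⁻ w in ball c R, ‖F w‖ₑ ^ p) ^ (1 / p) * V ^ (1 - 1 / p) := by
    have := eLpNorm'_le_eLpNorm'_mul_rpow_measure_univ (μ := volume.restrict (ball c R))
      zero_lt_one hp
      (hF.continuousOn.aestronglyMeasurable measurableSet_ball)
    simp only [eLpNorm', ENNReal.rpow_one, div_one, Measure.restrict_apply_univ] at this
    exact (volume_ball_mul_enorm_le_setLIntegral_enorm hF).trans this
  have hVp : V ^ p = V ^ (p - 1) * V := by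
    conv_lhs => rw [← sub_add_cancel p 1]
    rw [ENNReal.rpow_add _ _ hV0 hVtop, ENNReal.rpow_one]
  have hpow : V ^ (p - 1) * (V * ‖F c‖ₑ ^ p) ≤ V ^ (p - 1) * ∫⁻ w in ball c R, ‖F w‖ₑ ^ p := by
    calc V ^ (p - 1) * (V * ‖F c‖ₑ ^ p) = (V * ‖F c‖ₑ) ^ p := by
          rw [ENNReal.mul_rpow_of_nonneg _ _ hp0.le, ← mul_assoc, hVp]
      _ ≤ ((∫⁻ w in ball c R, ‖F w‖ₑ ^ p) ^ (1 / p) * V ^ (1 - 1 / p)) ^ p := by gcongr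
      _ = V ^ (p - 1) * ∫⁻ w in ball c R, ‖F w‖ₑ ^ p := by
          rw [ENNReal.mul_rpow_of_nonneg _ _ hp0.le, ← ENNReal.rpow_mul, ← ENNReal.rpow_mul,
            one_div_mul_cancel hp0.ne', ENNReal.rpow_one, mul_comm, sub_mul, one_mul,
            one_div_mul_cancel hp0.ne']
  exact (ENNReal.mul_le_mul_iff_right (by simp [hV0, hVtop]) (by simp [hV0, hVtop])).1 hpow

end MeanValue

theorem rpow_le_rpow_abs_of_mem_Icc {K t : ℝ} (hK : 0 < K) (ht : t ∈ Icc K⁻¹ K) (α : ℝ) :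
    t ^ α ≤ K ^ |α| := by
  have ht0 : 0 < t := (inv_pos.2 hK).trans_le ht.1
  rcases le_or_gt 0 α with hα | hα
  · rw [abs_of_nonneg hα]
    exact Real.rpow_le_rpow ht0.le ht.2 hα
  · calc t ^ α ≤ K⁻¹ ^ α := Real.rpow_le_rpow_of_nonpos (inv_pos.2 hK) ht.1 hα.le
      _ = K ^ |α| := by rw [abs_of_neg hα, Real.inv_rpow hK.le, Real.rpow_neg hK.le]

theorem norm_mem_Ioo_of_mem_ball {z w : ℂ} (hw : w ∈ ball z ((1 - ‖z‖) / 2)) :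
    ‖w‖ ∈ Ioo ((3 * ‖z‖ - 1) / 2) ((1 + ‖z‖) / 2) := by
  rw [mem_ball, dist_eq_norm] at hw
  have := abs_lt.1 ((abs_norm_sub_norm_le w z).trans_lt hw)
  constructor <;> linarith

theorem ball_subset_unitDisk_inter_norm_gt {z : ℂ} {r : ℝ} (hrz : (2 * r + 1) / 3 ≤ ‖z‖) :
    ball z ((1 - ‖z‖) / 2) ⊆ unitDisk ∩ {w | r < ‖w‖} := fun w hw ↦ by
  obtain ⟨hlow, hup⟩ := norm_mem_Ioo_of_mem_ball hw
  exact ⟨mem_ball_zero_iff.2 (by linarith), by rw [mem_ofPred_eq]; linarith⟩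

theorem one_sub_sq_norm_mem_Icc_of_mem_ball {z w : ℂ} (hw : w ∈ ball z ((1 - ‖z‖) / 2)) :
    1 - ‖w‖ ^ 2 ∈ Icc ((1 - ‖z‖ ^ 2) / 4) (4 * (1 - ‖z‖ ^ 2)) := by
  obtain ⟨hlow, hup⟩ := norm_mem_Ioo_of_mem_ball hw
  constructor <;> nlinarith [norm_nonneg z, norm_nonneg w]

theorem one_sub_sq_norm_rpow_le_of_mem_ball {z w : ℂ} (hw : w ∈ ball z ((1 - ‖z‖) / 2))
    (α : ℝ) : (1 - ‖z‖ ^ 2) ^ α ≤ 4 ^ |α| * (1 - ‖w‖ ^ 2) ^ α := by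
  obtain ⟨hlow, hup⟩ := one_sub_sq_norm_mem_Icc_of_mem_ball hw
  have hz : ‖z‖ < 1 := by
    have := norm_mem_Ioo_of_mem_ball hw
    linarith [this.1, this.2]
  have hs : 0 < 1 - ‖z‖ ^ 2 := by nlinarith [norm_nonneg z]
  have hu : 0 < 1 - ‖w‖ ^ 2 := by linarith
  have hratio : (1 - ‖z‖ ^ 2) / (1 - ‖w‖ ^ 2) ∈ Icc (4 : ℝ)⁻¹ 4 := by
    constructor
    · rw [le_div_iff₀ hu]; linarith
    · rw [div_le_iff₀ hu]; linarith
  calc (1 - ‖z‖ ^ 2) ^ α = ((1 - ‖z‖ ^ 2) / (1 - ‖w‖ ^ 2)) ^ α * (1 - ‖w‖ ^ 2) ^ α := by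
        rw [Real.div_rpow hs.le hu.le, div_mul_cancel₀ _ (Real.rpow_pos_of_pos hu α).ne']
    _ ≤ 4 ^ |α| * (1 - ‖w‖ ^ 2) ^ α := by
        gcongr
        exact rpow_le_rpow_abs_of_mem_Icc four_pos hratio α

theorem ofReal_mul_le_setLIntegral_ball_weighted {H : ℂ → ℂ} (hH : DifferentiableOn ℂ H unitDisk)
    {z : ℂ} (hz : z ∈ unitDisk) {p : ℝ} (hp : 1 ≤ p) (α : ℝ) :
    ENNReal.ofReal (π / (16 * 4 ^ |α|) * ((1 - ‖z‖ ^ 2) ^ (α + 2) * ‖H z‖ ^ p)) ≤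
      ∫⁻ w in ball z ((1 - ‖z‖) / 2), ENNReal.ofReal (‖H w‖ ^ p * (1 - ‖w‖ ^ 2) ^ α) := by
  set B := ball z ((1 - ‖z‖) / 2)
  set s := 1 - ‖z‖ ^ 2
  have hz1 : ‖z‖ < 1 := mem_ball_zero_iff.1 hz
  have hs : 0 < s := by nlinarith [norm_nonneg z]
  have hB : B ⊆ unitDisk :=
    (ball_subset_unitDisk_inter_norm_gt (r := (3 * ‖z‖ - 1) / 2) (by linarith)).trans
      inter_subset_left
  set κ := s ^ α / 4 ^ |α|
  have hκ : 0 ≤ κ := by positivity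
  have hvol : ENNReal.ofReal (π * s ^ 2 / 16) ≤ volume B := by
    rw [Complex.volume_ball, ← ENNReal.ofReal_pow (by linarith), ← ENNReal.ofReal_coe_nnreal,
      NNReal.coe_real_pi, ← ENNReal.ofReal_mul (by positivity)]
    have hs2 : s ≤ 2 * (1 - ‖z‖) := by nlinarith [norm_nonneg z]
    have hsq : s ^ 2 / 16 ≤ ((1 - ‖z‖) / 2) ^ 2 := by nlinarith
    apply ENNReal.ofReal_le_ofReal
    nlinarith [Real.pi_pos]
  calc ENNReal.ofReal (π / (16 * 4 ^ |α|) * (s ^ (α + 2) * ‖H z‖ ^ p))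
      = ENNReal.ofReal (π * s ^ 2 / 16) * (ENNReal.ofReal κ * ‖H z‖ₑ ^ p) := by
        rw [← ofReal_norm, ENNReal.ofReal_rpow_of_nonneg (norm_nonneg _) (by linarith),
          ← ENNReal.ofReal_mul hκ, ← ENNReal.ofReal_mul (by positivity), Real.rpow_add hs]
        congr 1
        simp only [κ, Real.rpow_two]
        field_simp
    _ ≤ volume B * (ENNReal.ofReal κ * ‖H z‖ₑ ^ p) := by gcongr
    _ = ENNReal.ofReal κ * (volume B * ‖H z‖ₑ ^ p) := by ring
    _ ≤ ENNReal.ofReal κ * ∫⁻ w in B, ‖H w‖ₑ ^ p := by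
        gcongr
        exact volume_ball_mul_enorm_rpow_le_setLIntegral_enorm_rpow hp (hH.mono hB)
    _ = ∫⁻ w in B, ENNReal.ofReal (κ * ‖H w‖ ^ p) := by
        rw [← lintegral_const_mul' _ _ ENNReal.ofReal_ne_top]
        congr! 2 with w
        rw [ENNReal.ofReal_mul hκ, ← ofReal_norm,
          ENNReal.ofReal_rpow_of_nonneg (norm_nonneg _) (by linarith)]
    _ ≤ ∫⁻ w in B, ENNReal.ofReal (‖H w‖ ^ p * (1 - ‖w‖ ^ 2) ^ α) := by
        refine setLIntegral_mono' measurableSet_ball fun w hw ↦ ENNReal.ofReal_le_ofReal ?_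
        rw [mul_comm]
        gcongr
        rw [div_le_iff₀ (by positivity)]
        linarith [one_sub_sq_norm_rpow_le_of_mem_ball hw α]

theorem exists_setLIntegral_unitDisk_inter_norm_gt_lt {f : ℂ → ℝ≥0∞}
    (hf : ∫⁻ w in unitDisk, f w ≠ ⊤) {c : ℝ≥0∞} (hc : 0 < c) :
    ∃ r : ℝ, 0 ≤ r ∧ r < 1 ∧ ∫⁻ w in unitDisk ∩ {w | r < ‖w‖}, f w < c := by
  set S : ℕ → Set ℂ := fun n ↦ unitDisk ∩ {w | 1 - 1 / ((n : ℝ) + 1) < ‖w‖}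
  have hS (n : ℕ) : MeasurableSet (S n) :=
    measurableSet_ball.inter (measurableSet_lt measurable_const measurable_norm)
  have hanti : Antitone S := fun n m hnm w ⟨hw, hwr⟩ ↦
    ⟨hw, by rw [mem_ofPred_eq] at hwr ⊢; linarith [Nat.one_div_le_one_div (α := ℝ) hnm]⟩
  have hempty : ⋂ n, S n = ∅ := by
    refine eq_empty_of_forall_notMem fun w hw ↦ ?_
    obtain ⟨n, hn⟩ := exists_nat_one_div_lt (sub_pos.2 (mem_ball_zero_iff.1 (mem_iInter.1 hw 0).1))
    linarith [(mem_iInter.1 hw n).2.out]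
  have htendsto := tendsto_measure_iInter_atTop (μ := volume.withDensity f)
    (fun n ↦ (hS n).nullMeasurableSet) hanti
    ⟨0, by
      rw [withDensity_apply _ (hS 0)]
      exact ne_top_of_le_ne_top hf (lintegral_mono_set inter_subset_left)⟩
  rw [hempty, measure_empty] at htendsto
  obtain ⟨n, hn⟩ := (htendsto.eventually_lt_const hc).exists
  refine ⟨1 - 1 / ((n : ℝ) + 1), ?_, ?_, ?_⟩
  · linarith [Nat.one_div_le_one_div (α := ℝ) (Nat.zero_le n)]
  · linarith [Nat.one_div_pos_of_nat (α := ℝ) (n := n)]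
  · rwa [Function.comp_apply, withDensity_apply _ (hS n)] at hn

theorem sq_mul_rpow_half_mul_rpow_sub_two {a s : ℝ} (ha : 0 ≤ a) (hs : 0 < s) (p : ℝ) :
    (a ^ 2 * s) ^ (p / 2) * s ^ (p - 2) = a ^ p * s ^ (3 * p / 2 - 2) := by
  rw [Real.mul_rpow (sq_nonneg a) hs.le, ← Real.rpow_natCast a 2, ← Real.rpow_mul ha, mul_assoc,
    ← Real.rpow_add hs]
  ring_nf

theorem mul_sqrt_sq_mul_rpow {a s : ℝ} (ha : 0 ≤ a) (hs : 0 < s) (p : ℝ) :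
    (s * √(a ^ 2 * s)) ^ p = s ^ (3 * p / 2) * a ^ p := by
  have hsqrt : s * √(a ^ 2 * s) = s ^ (3 / 2 : ℝ) * a := by
    rw [Real.sqrt_mul (sq_nonneg a), Real.sqrt_sq ha, Real.sqrt_eq_rpow,
      show (3 / 2 : ℝ) = 1 + 1 / 2 by norm_num, Real.rpow_add hs, Real.rpow_one]
    ring
  rw [hsqrt, Real.mul_rpow (by positivity) ha, ← Real.rpow_mul hs.le]
  ring_nf

/-- If `f = h + conj g` is sense-preserving harmonic with dilatation
`w(z) = z` and `f ∈ 𝔅𝒯_p` for some `p > 1`, then `f ∈ 𝔅𝒯₀`, i.e.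
`(1-|z|²)√(J_f(z)) → 0` as `|z| → 1⁻`. -/
theorem besovType_implies_littleBlochType_for_identity_dilatation
    (p : ℝ) (hp : 1 < p) (h g : ℂ → ℂ) (hsp : SensePreserving h g)
    (hgd : ∀ z ∈ unitDisk, deriv g z = z * deriv h z)
    (hBp : ∫⁻ z in unitDisk, ENNReal.ofReal
        ((‖deriv h z‖ ^ 2 - ‖deriv g z‖ ^ 2) ^ (p / 2) * (1 - ‖z‖ ^ 2) ^ (p - 2)) < ⊤) :
    ∀ ε : ℝ, 0 < ε → ∃ r : ℝ, 0 ≤ r ∧ r < 1 ∧ ∀ z ∈ unitDisk, r < ‖z‖ →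
      (1 - ‖z‖ ^ 2) * Real.sqrt (‖deriv h z‖ ^ 2 - ‖deriv g z‖ ^ 2) < ε := by
  intro ε hε
  set α := 3 * p / 2 - 2
  have hH : DifferentiableOn ℂ (deriv h) unitDisk :=
    (hsp.1.analyticOnNhd isOpen_ball).deriv.differentiableOn
  have hs (z : ℂ) (hz : z ∈ unitDisk) : 0 < 1 - ‖z‖ ^ 2 := by
    nlinarith [norm_nonneg z, mem_ball_zero_iff.1 hz]
  have hJ (z : ℂ) (hz : z ∈ unitDisk) :
      ‖deriv h z‖ ^ 2 - ‖deriv g z‖ ^ 2 = ‖deriv h z‖ ^ 2 * (1 - ‖z‖ ^ 2) := by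
    rw [hgd z hz, norm_mul]; ring
  have hfin : ∫⁻ w in unitDisk, ENNReal.ofReal (‖deriv h w‖ ^ p * (1 - ‖w‖ ^ 2) ^ α) ≠ ⊤ := by
    refine ne_of_eq_of_ne (setLIntegral_congr_fun measurableSet_ball fun w hw ↦ ?_) hBp.ne
    rw [hJ w hw, sq_mul_rpow_half_mul_rpow_sub_two (norm_nonneg _) (hs w hw)]
  set κ := π / (16 * 4 ^ |α|)
  have hκ : 0 < κ := by positivity
  obtain ⟨r, hr0, hr1, htail⟩ := exists_setLIntegral_unitDisk_inter_norm_gt_lt hfin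
    (ENNReal.ofReal_pos.2 (by positivity : 0 < κ * ε ^ p))
  refine ⟨(2 * r + 1) / 3, by linarith, by linarith, fun z hz hrz ↦ ?_⟩
  have key := (ofReal_mul_le_setLIntegral_ball_weighted hH hz hp.le α).trans_lt <|
    (lintegral_mono_set (ball_subset_unitDisk_inter_norm_gt hrz.le)).trans_lt htail
  rw [ENNReal.ofReal_lt_ofReal_iff (by positivity), mul_lt_mul_iff_right₀ hκ, sub_add_cancel,
    ← mul_sqrt_sq_mul_rpow (norm_nonneg _) (hs z hz)] at key
  rw [hJ z hz]
  exact (Real.rpow_lt_rpow_iff (mul_nonneg (hs z hz).le (Real.sqrt_nonneg _)) hε.le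
    (by linarith)).1 key
end
end
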